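/- Let D ⊆ ℂ^N be a domain, μ₁ an admissible weight on D, U a bounded open set with closure contained in D on which μ₁ is integrable, and μ₂ any weight on U. Define μ̃₁(z) = max(μ₁(z), μ₂(z)) for z ∈ U and μ̃₁(z) = μ₁(z) for z ∈ D \ U. Then μ̃₁ is an admissible weight, L²_H(D,μ̃₁) ⊆ L²_H(D,μ₁), and the inclusion is continuous. -/

import Mathlib

open MeasureTheory Filter
open scoped Classical

/-- Lebesgue measure on `ℂ^N` (transported to `EuclideanSpace ℂ (Fin N)` via the
defeq with `Fin N → ℂ`). -/
noncomputable instance {N : ℕ} : MeasureSpace (EuclideanSpace ℂ (Fin N)) :=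
  { volume := Measure.map (WithLp.toLp 2) (volume : Measure (Fin N → ℂ)) }

/-- The weighted L² norm `‖f‖_μ = (∫_D |f|² μ)^{1/2}` on a domain `D ⊆ ℂ^N`. -/
noncomputable def wnorm {N : ℕ} (D : Set (EuclideanSpace ℂ (Fin N)))
    (μ : EuclideanSpace ℂ (Fin N) → ℝ) (f : EuclideanSpace ℂ (Fin N) → ℂ) : ℝ :=
  Real.sqrt (∫ z in D, ‖f z‖ ^ 2 * μ z)

/-- `L²_H(D,μ)`: holomorphic functions on `D` that are square-integrable against `μ`. -/
def L2H {N : ℕ} (D : Set (EuclideanSpace ℂ (Fin N)))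
    (μ : EuclideanSpace ℂ (Fin N) → ℝ) : Set (EuclideanSpace ℂ (Fin N) → ℂ) :=
  {f | DifferentiableOn ℂ f D ∧ IntegrableOn (fun z => ‖f z‖ ^ 2 * μ z) D}

/-- Every point evaluation `E_z : f ↦ f(z)` is continuous on `L²_H(D,μ)`. -/
def EvalContinuous {N : ℕ} (D : Set (EuclideanSpace ℂ (Fin N)))
    (μ : EuclideanSpace ℂ (Fin N) → ℝ) : Prop :=
  ∀ z ∈ D, ∃ C : ℝ, ∀ f ∈ L2H D μ, ‖f z‖ ≤ C * wnorm D μ f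

/-- `L²_H(D,μ)` is closed in `L²(D,μ)`: any `g ∈ L²(D,μ)` that is a norm-limit of a sequence
from `L²_H(D,μ)` agrees a.e. on `D` with a member of `L²_H(D,μ)`. -/
def ClosedInL2 {N : ℕ} (D : Set (EuclideanSpace ℂ (Fin N)))
    (μ : EuclideanSpace ℂ (Fin N) → ℝ) : Prop :=
  ∀ F : ℕ → (EuclideanSpace ℂ (Fin N) → ℂ), (∀ n, F n ∈ L2H D μ) →
    ∀ g : EuclideanSpace ℂ (Fin N) → ℂ,
      IntegrableOn (fun z => ‖g z‖ ^ 2 * μ z) D →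
      Tendsto (fun n => wnorm D μ (fun z => F n z - g z)) atTop (nhds 0) →
      ∃ g' ∈ L2H D μ, ∀ᵐ z ∂(volume.restrict D), g z = g' z

/-- An admissible weight: positive and measurable, point evaluations are continuous on
`L²_H(D,μ)`, and `L²_H(D,μ)` is closed in `L²(D,μ)`. -/
def Admissible {N : ℕ} (D : Set (EuclideanSpace ℂ (Fin N)))
    (μ : EuclideanSpace ℂ (Fin N) → ℝ) : Prop :=
  Measurable μ ∧ (∀ z ∈ D, 0 < μ z) ∧ EvalContinuous D μ ∧ ClosedInL2 D μ

/-! If `μ ≤ ν` then `‖f‖_μ ≤ ‖f‖_ν`, so `L²_H(D,ν) ⊆ L²_H(D,μ)` and convergence in `L²(D,ν)`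
implies convergence in `L²(D,μ)`; hence continuity of point evaluations and closedness pass from
`μ` to `ν`, and `μ̃₁ ≥ μ₁`. Since the Bochner integral is `0` off integrable functions, the
comparison `‖f‖_μ ≤ ‖f‖_ν` only holds when the `ν`-integrand of `f` is integrable or not even
a.e. measurable (then neither integrand is integrable, as `μ` and `ν` are positive). -/

section WeightComparison

variable {α : Type*} [MeasurableSpace α] {m : Measure α} {μ ν F : α → ℝ}

theorem MeasureTheory.AEStronglyMeasurable.mul_weight_of_ne_zero (hμ : Measurable μ)
    (hν : Measurable ν) (hμ0 : ∀ᵐ x ∂m, μ x ≠ 0)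
    (hF : AEStronglyMeasurable (fun x => F x * μ x) m) :
    AEStronglyMeasurable (fun x => F x * ν x) m := by
  refine (hF.mul (hν.div hμ).aestronglyMeasurable).congr ?_
  filter_upwards [hμ0] with x hx
  simp only [Pi.mul_apply, Pi.div_apply]
  field_simp

theorem MeasureTheory.Integrable.mul_weight_of_le (hμ : Measurable μ) (hν : Measurable ν)
    (hpos : ∀ᵐ x ∂m, 0 < μ x) (hle : ∀ᵐ x ∂m, μ x ≤ ν x) (hF0 : ∀ x, 0 ≤ F x)
    (hF : Integrable (fun x => F x * ν x) m) :
    Integrable (fun x => F x * μ x) m := by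
  have hν0 : ∀ᵐ x ∂m, ν x ≠ 0 := by
    filter_upwards [hpos, hle] with x hx hxle using (hx.trans_le hxle).ne'
  refine hF.mono' (hF.aestronglyMeasurable.mul_weight_of_ne_zero hν hμ hν0) ?_
  filter_upwards [hpos, hle] with x hx hxle
  rw [Real.norm_of_nonneg (mul_nonneg (hF0 x) hx.le)]
  exact mul_le_mul_of_nonneg_left hxle (hF0 x)

end WeightComparison

theorem norm_sub_sq_mul_le {E : Type*} [SeminormedAddCommGroup E] (a b : E) {w : ℝ}
    (hw : 0 ≤ w) : ‖a - b‖ ^ 2 * w ≤ 2 * (‖a‖ ^ 2 * w) + 2 * (‖b‖ ^ 2 * w) := by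
  have hsq : ‖a - b‖ ^ 2 ≤ 2 * ‖a‖ ^ 2 + 2 * ‖b‖ ^ 2 := by
    nlinarith [norm_sub_le a b, norm_nonneg (a - b), sq_nonneg (‖a‖ - ‖b‖)]
  nlinarith [mul_le_mul_of_nonneg_right hsq hw]

section WeightedNorm

variable {N : ℕ} {D : Set (EuclideanSpace ℂ (Fin N))} {μ ν : EuclideanSpace ℂ (Fin N) → ℝ}
  {f : EuclideanSpace ℂ (Fin N) → ℂ}

theorem integrableOn_weight_of_le (hD : MeasurableSet D) (hμ : Measurable μ)
    (hν : Measurable ν) (hpos : ∀ z ∈ D, 0 < μ z) (hle : ∀ z ∈ D, μ z ≤ ν z)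
    (hf : IntegrableOn (fun z => ‖f z‖ ^ 2 * ν z) D) :
    IntegrableOn (fun z => ‖f z‖ ^ 2 * μ z) D :=
  Integrable.mul_weight_of_le hμ hν (ae_restrict_of_forall_mem hD hpos)
    (ae_restrict_of_forall_mem hD hle) (fun _ => sq_nonneg _) hf

theorem wnorm_le_wnorm_of_integrableOn (hD : MeasurableSet D) (hμ : Measurable μ)
    (hν : Measurable ν) (hpos : ∀ z ∈ D, 0 < μ z) (hle : ∀ z ∈ D, μ z ≤ ν z)
    (hf : IntegrableOn (fun z => ‖f z‖ ^ 2 * ν z) D) :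
    wnorm D μ f ≤ wnorm D ν f :=
  Real.sqrt_le_sqrt <| setIntegral_mono_on (integrableOn_weight_of_le hD hμ hν hpos hle hf) hf hD
    fun z hz => mul_le_mul_of_nonneg_left (hle z hz) (sq_nonneg _)

theorem wnorm_eq_zero_of_not_aestronglyMeasurable (hD : MeasurableSet D) (hμ : Measurable μ)
    (hν : Measurable ν) (hpos : ∀ z ∈ D, 0 < μ z)
    (hf : ¬AEStronglyMeasurable (fun z => ‖f z‖ ^ 2 * ν z) (volume.restrict D)) :
    wnorm D μ f = 0 := by
  have hμ0 : ∀ᵐ z ∂(volume.restrict D), μ z ≠ 0 :=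
    ae_restrict_of_forall_mem hD fun z hz => (hpos z hz).ne'
  have hnot : ¬Integrable (fun z => ‖f z‖ ^ 2 * μ z) (volume.restrict D) := fun hi =>
    hf (hi.aestronglyMeasurable.mul_weight_of_ne_zero hμ hν hμ0)
  rw [wnorm, integral_undef hnot, Real.sqrt_zero]

theorem wnorm_le_wnorm_of_le_integrableOn {G : EuclideanSpace ℂ (Fin N) → ℝ}
    (hD : MeasurableSet D) (hμ : Measurable μ) (hν : Measurable ν) (hpos : ∀ z ∈ D, 0 < μ z)
    (hle : ∀ z ∈ D, μ z ≤ ν z) (hG : IntegrableOn G D)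
    (hfG : ∀ z ∈ D, ‖f z‖ ^ 2 * ν z ≤ G z) :
    wnorm D μ f ≤ wnorm D ν f := by
  by_cases hf : AEStronglyMeasurable (fun z => ‖f z‖ ^ 2 * ν z) (volume.restrict D)
  · refine wnorm_le_wnorm_of_integrableOn hD hμ hν hpos hle (hG.mono' hf ?_)
    filter_upwards [ae_restrict_mem hD] with z hz
    rw [Real.norm_of_nonneg (mul_nonneg (sq_nonneg _) ((hpos z hz).le.trans (hle z hz)))]
    exact hfG z hz
  · rw [wnorm_eq_zero_of_not_aestronglyMeasurable hD hμ hν hpos hf]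
    exact Real.sqrt_nonneg _

theorem wnorm_sub_le_wnorm_sub (hD : MeasurableSet D) (hμ : Measurable μ) (hν : Measurable ν)
    (hpos : ∀ z ∈ D, 0 < μ z) (hle : ∀ z ∈ D, μ z ≤ ν z) {g : EuclideanSpace ℂ (Fin N) → ℂ}
    (hf : IntegrableOn (fun z => ‖f z‖ ^ 2 * ν z) D)
    (hg : IntegrableOn (fun z => ‖g z‖ ^ 2 * ν z) D) :
    wnorm D μ (fun z => f z - g z) ≤ wnorm D ν (fun z => f z - g z) :=
  wnorm_le_wnorm_of_le_integrableOn hD hμ hν hpos hle ((hf.const_mul 2).add (hg.const_mul 2))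
    fun z hz => norm_sub_sq_mul_le (f z) (g z) ((hpos z hz).le.trans (hle z hz))

theorem L2H_subset_L2H_of_le (hD : MeasurableSet D) (hμ : Measurable μ) (hν : Measurable ν)
    (hpos : ∀ z ∈ D, 0 < μ z) (hle : ∀ z ∈ D, μ z ≤ ν z) :
    L2H D ν ⊆ L2H D μ :=
  fun _ hf => ⟨hf.1, integrableOn_weight_of_le hD hμ hν hpos hle hf.2⟩

theorem EvalContinuous.of_le (hD : MeasurableSet D) (hμ : Measurable μ) (hν : Measurable ν)
    (hpos : ∀ z ∈ D, 0 < μ z) (hle : ∀ z ∈ D, μ z ≤ ν z) (hev : EvalContinuous D μ) :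
    EvalContinuous D ν := by
  intro z hz
  obtain ⟨C, hC⟩ := hev z hz
  refine ⟨|C|, fun f hf => ?_⟩
  calc ‖f z‖ ≤ C * wnorm D μ f := hC f (L2H_subset_L2H_of_le hD hμ hν hpos hle hf)
    _ ≤ |C| * wnorm D μ f := mul_le_mul_of_nonneg_right (le_abs_self C) (Real.sqrt_nonneg _)
    _ ≤ |C| * wnorm D ν f := mul_le_mul_of_nonneg_left
        (wnorm_le_wnorm_of_integrableOn hD hμ hν hpos hle hf.2) (abs_nonneg C)

theorem ClosedInL2.of_le (hD : MeasurableSet D) (hμ : Measurable μ) (hν : Measurable ν)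
    (hpos : ∀ z ∈ D, 0 < μ z) (hle : ∀ z ∈ D, μ z ≤ ν z) (hcl : ClosedInL2 D μ) :
    ClosedInL2 D ν := by
  intro F hF g hg hlim
  have hlimμ : Tendsto (fun n => wnorm D μ (fun z => F n z - g z)) atTop (nhds 0) :=
    squeeze_zero (fun _ => Real.sqrt_nonneg _)
      (fun n => wnorm_sub_le_wnorm_sub hD hμ hν hpos hle (hF n).2 hg) hlim
  obtain ⟨g', hg', hgg'⟩ := hcl F (fun n => L2H_subset_L2H_of_le hD hμ hν hpos hle (hF n))
    g (integrableOn_weight_of_le hD hμ hν hpos hle hg) hlimμ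
  refine ⟨g', ⟨hg'.1, hg.congr ?_⟩, hgg'⟩
  filter_upwards [hgg'] with z hz
  rw [hz]

theorem Admissible.of_le (hD : MeasurableSet D) (hμ : Admissible D μ) (hν : Measurable ν)
    (hle : ∀ z ∈ D, μ z ≤ ν z) : Admissible D ν :=
  have ⟨hμm, hpos, hev, hcl⟩ := hμ
  ⟨hν, fun z hz => (hpos z hz).trans_le (hle z hz), hev.of_le hD hμm hν hpos hle,
    hcl.of_le hD hμm hν hpos hle⟩

end WeightedNorm

theorem max_weight_admissible_general {N : ℕ} (D U : Set (EuclideanSpace ℂ (Fin N)))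
    (hD : IsOpen D)
    (μ₁ μ₂ : EuclideanSpace ℂ (Fin N) → ℝ)
    (hμ₁ : Admissible D μ₁)
    (hμ₂meas : Measurable μ₂)
    (hU : IsOpen U) :
    Admissible D (fun z => if z ∈ U then max (μ₁ z) (μ₂ z) else μ₁ z) ∧
    L2H D (fun z => if z ∈ U then max (μ₁ z) (μ₂ z) else μ₁ z) ⊆ L2H D μ₁ ∧
    ∃ C : ℝ, 0 < C ∧ ∀ f ∈ L2H D (fun z => if z ∈ U then max (μ₁ z) (μ₂ z) else μ₁ z),
      wnorm D μ₁ f ≤ C * wnorm D (fun z => if z ∈ U then max (μ₁ z) (μ₂ z) else μ₁ z) f := by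
  set ν := fun z => if z ∈ U then max (μ₁ z) (μ₂ z) else μ₁ z
  have hDm := hD.measurableSet
  have hμ₁m := hμ₁.1
  have hμ₁pos := hμ₁.2.1
  have hνm : Measurable ν := hμ₁m.max hμ₂meas |>.ite hU.measurableSet hμ₁m
  have hle : ∀ z ∈ D, μ₁ z ≤ ν z := fun z _ => by
    by_cases hz : z ∈ U <;> simp [ν, hz]
  refine ⟨hμ₁.of_le hDm hνm hle, L2H_subset_L2H_of_le hDm hμ₁m hνm hμ₁pos hle, 1, one_pos,
    fun f hf => ?_⟩
  rw [one_mul]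
  exact wnorm_le_wnorm_of_integrableOn hDm hμ₁m hνm hμ₁pos hle hf.2

/-- modifying an admissible weight by taking a max with another weight on a
bounded open set `U` (with `closure U ⊆ D`) on which `μ₁` is integrable yields an admissible
weight `μ̃₁` with `L²_H(D,μ̃₁) ⊆ L²_H(D,μ₁)` and continuous inclusion. -/
theorem max_weight_admissible {N : ℕ} (D U : Set (EuclideanSpace ℂ (Fin N)))
    (hD : IsOpen D) (hDconn : IsConnected D)
    (μ₁ μ₂ : EuclideanSpace ℂ (Fin N) → ℝ)
    (hμ₁ : Admissible D μ₁)
    (hμ₂meas : Measurable μ₂) (hμ₂pos : ∀ z ∈ U, 0 < μ₂ z)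
    (hU : IsOpen U) (hUbdd : Bornology.IsBounded U) (hUcl : closure U ⊆ D)
    (hμ₁int : IntegrableOn μ₁ U) :
    Admissible D (fun z => if z ∈ U then max (μ₁ z) (μ₂ z) else μ₁ z) ∧
    L2H D (fun z => if z ∈ U then max (μ₁ z) (μ₂ z) else μ₁ z) ⊆ L2H D μ₁ ∧
    ∃ C : ℝ, 0 < C ∧ ∀ f ∈ L2H D (fun z => if z ∈ U then max (μ₁ z) (μ₂ z) else μ₁ z),
      wnorm D μ₁ f ≤ C * wnorm D (fun z => if z ∈ U then max (μ₁ z) (μ₂ z) else μ₁ z) f :=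
  max_weight_admissible_general D U hD μ₁ μ₂ hμ₁ hμ₂meas hU
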